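/- arXiv:2603.24188 — 8 statements merged into one kernel-verified Lean document; each statement's English description precedes it below -/
import Mathlib

section
/- Let R be a right duo ring (every right ideal is two-sided). Then for any right ideals I ≤ H of R, if there exists an injective R-module homomorphism from R/I to R/H, then I = H. In particular, R as a right R-module is super Bassian. -/
/-- A module `M` is *Bassian* if every monomorphism `M → M/N` forces `N = 0`. -/
def IsBassian (R : Type*) [Ring R] (M : Type*) [AddCommGroup M] [Module R M] : Prop :=
  ∀ N : Submodule R M, (∃ f : M →ₗ[R] M ⧸ N, Function.Injective f) → N = ⊥

/-- A module `M` is *super Bassian* if every quotient of `M` is Bassian. -/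
def IsSuperBassian (R : Type*) [Ring R] (M : Type*) [AddCommGroup M] [Module R M] : Prop :=
  ∀ K : Submodule R M, IsBassian R (M ⧸ K)

/-- A module `M` is *hereditarily Bassian* if every submodule of `M` is Bassian. -/
def IsHereditarilyBassian (R : Type*) [Ring R] (M : Type*) [AddCommGroup M] [Module R M] :
    Prop :=
  ∀ N : Submodule R M, IsBassian R N

/-- If `R` is a duo ring (every one-sided ideal is two-sided), then for ideals `I ≤ H`,
an injective `R`-linear map `R/I → R/H` forces `I = H`; in particular `R` is super Bassian
as a module over itself. -/
theorem duo_ring_superBassian (R : Type*) [Ring R]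
    (hduo : ∀ (I : Submodule R R), ∀ a ∈ I, ∀ r : R, a * r ∈ I) :
    (∀ I H : Submodule R R, I ≤ H →
      (∃ f : (R ⧸ I) →ₗ[R] R ⧸ H, Function.Injective f) → I = H) ∧
    IsSuperBassian R R := by
  have main : ∀ I H : Submodule R R, I ≤ H →
      (∃ f : (R ⧸ I) →ₗ[R] R ⧸ H, Function.Injective f) → I = H := by
    intro I H hIH ⟨f, hf⟩
    refine le_antisymm hIH ?_
    intro a ha
    obtain ⟨c, hc⟩ := Submodule.Quotient.mk_surjective H (f (Submodule.Quotient.mk 1))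
    have key : f (Submodule.Quotient.mk a) = Submodule.Quotient.mk (a * c) := by
      have : (Submodule.Quotient.mk a : R ⧸ I) = a • Submodule.Quotient.mk (1 : R) := by
        rw [← Submodule.Quotient.mk_smul, smul_eq_mul, mul_one]
      rw [this, map_smul, ← hc, ← Submodule.Quotient.mk_smul, smul_eq_mul]
    have hz : f (Submodule.Quotient.mk a) = 0 := by
      rw [key, Submodule.Quotient.mk_eq_zero]
      exact hduo H a ha c
    have := hf (by rw [hz, map_zero] : f (Submodule.Quotient.mk a) = f 0)
    rwa [Submodule.Quotient.mk_eq_zero] at this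
  refine ⟨main, ?_⟩
  intro K N ⟨g, hg⟩
  set H := N.comap K.mkQ with hH
  have hKH : K ≤ H := by
    intro x hx
    simp only [hH, Submodule.mem_comap]
    have : K.mkQ x = 0 := by
      rw [Submodule.mkQ_apply, Submodule.Quotient.mk_eq_zero]; exact hx
    rw [this]; exact N.zero_mem
  have hmap : H.map K.mkQ = N :=
    Submodule.map_comap_eq_of_surjective (Submodule.mkQ_surjective K) N
  have e : ((R ⧸ K) ⧸ N) ≃ₗ[R] R ⧸ H := by
    rw [← hmap]
    exact Submodule.quotientQuotientEquivQuotient K H hKH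
  have hKeq : K = H := main K H hKH ⟨e.toLinearMap.comp g, e.injective.comp hg⟩
  rw [← hmap, ← hKeq]
  apply le_bot_iff.mp
  rintro y ⟨x, hx, rfl⟩
  simp only [Submodule.mem_bot, Submodule.mkQ_apply, Submodule.Quotient.mk_eq_zero]
  exact hx
end

section
/- Let M be a right R-module and suppose there exist a submodule N ≤ M and a nonzero module S with M/N isomorphic to the countably infinite direct sum S^(ω). Then M is not super Bassian. -/
/-- If some quotient `M/N` is isomorphic to a countably infinite direct sum `S^(ω)` of a
nonzero module `S`, then `M` is not super Bassian. -/
theorem not_isSuperBassian_of_quotient_directSum (R : Type*) [Ring R] (M : Type*)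
    [AddCommGroup M] [Module R M] (N : Submodule R M) (S : Type*) [AddCommGroup S]
    [Module R S] [Nontrivial S] (e : (M ⧸ N) ≃ₗ[R] DirectSum ℕ fun _ => S) :
    ¬ IsSuperBassian R M := by
  intro hSB
  -- work with `A := ℕ →₀ S`
  set e' : (M ⧸ N) ≃ₗ[R] (ℕ →₀ S) :=
    e.trans (finsuppLEquivDirectSum R S ℕ).symm with he'
  -- the submodule generated by the 0-th coordinate
  set K : Submodule R (ℕ →₀ S) := LinearMap.range (Finsupp.lsingle (M := S) (R := R) 0) with hK
  set N' : Submodule R (M ⧸ N) := K.comap e'.toLinearMap with hN'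
  -- the shift map is injective
  have hinj : Function.Injective (Finsupp.lmapDomain S R Nat.succ) :=
    Finsupp.mapDomain_injective Nat.succ_injective
  -- the composite injective map into the quotient by `K`
  have hg : Function.Injective (K.mkQ.comp (Finsupp.lmapDomain S R Nat.succ)) := by
    intro x y hxy
    simp only [LinearMap.coe_comp, Function.comp_apply, Finsupp.lmapDomain_apply] at hxy
    have h : Finsupp.mapDomain Nat.succ x - Finsupp.mapDomain Nat.succ y ∈ K := by
      rw [← Submodule.Quotient.eq]
      exact hxy
    obtain ⟨s, hs⟩ := h
    have hdiff : Finsupp.mapDomain Nat.succ (x - y) = Finsupp.single 0 s := by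
      have h2 := map_sub (Finsupp.lmapDomain S R Nat.succ) x y
      simp only [Finsupp.lmapDomain_apply] at h2
      rw [h2, ← hs]
      simp
    have h0 : s = 0 := by
      have := congrArg (fun f => f 0) hdiff
      simp only [Finsupp.single_eq_same] at this
      rw [Finsupp.mapDomain_notin_range] at this
      · exact this.symm
      · rintro ⟨n, hn⟩
        exact Nat.succ_ne_zero n hn
    rw [h0, Finsupp.single_zero] at hdiff
    have : x - y = 0 := hinj (by simpa using hdiff)
    exact sub_eq_zero.mp this
  have hcomp : Function.Injective
      ((K.mkQ.comp (Finsupp.lmapDomain S R Nat.succ)).comp e'.toLinearMap) := by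
    rw [LinearMap.coe_comp]
    exact hg.comp e'.injective
  -- identify `(ℕ →₀ S) ⧸ K` with `(M ⧸ N) ⧸ N'`
  have hmap : N'.map (e' : (M ⧸ N) →ₗ[R] (ℕ →₀ S)) = K := by
    rw [hN']
    exact Submodule.map_comap_eq_of_surjective e'.surjective K
  let q : ((M ⧸ N) ⧸ N') ≃ₗ[R] ((ℕ →₀ S) ⧸ K) := Submodule.Quotient.equiv N' K e' hmap
  have hB := hSB N N' ⟨q.symm.toLinearMap.comp
    ((K.mkQ.comp (Finsupp.lmapDomain S R Nat.succ)).comp e'.toLinearMap),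
    q.symm.injective.comp hcomp⟩
  -- but `N'` is nonzero
  obtain ⟨s, hs⟩ := exists_ne (0 : S)
  have hmem : e'.symm (Finsupp.single 0 s) ∈ N' := by
    rw [hN']
    simp only [Submodule.mem_comap, LinearEquiv.coe_coe, LinearEquiv.apply_symm_apply]
    exact ⟨s, rfl⟩
  rw [hB] at hmem
  apply hs
  have : Finsupp.single 0 s = 0 := by
    have := (Submodule.mem_bot R).mp hmem
    have h2 := congrArg e' this
    simpa using h2
  simpa using congrArg (fun f => f 0) this
end

section
/- Every finitely generated right module over a right Noetherian ring is super Bassian. -/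
/-- Every Noetherian module is Bassian. -/
theorem isBassian_of_isNoetherian (R : Type*) [Ring R] (M : Type*) [AddCommGroup M] [Module R M]
    [IsNoetherian R M] : IsBassian R M := by
  rintro N ⟨f, hf⟩
  set q : M →ₗ[R] M ⧸ N := N.mkQ with hq
  -- the monotone operator A ↦ q⁻¹ (f '' A)
  set Φ : Submodule R M → Submodule R M :=
    fun A => Submodule.comap q (Submodule.map f A) with hΦ
  have Φmono : Monotone Φ := fun A B hAB =>
    Submodule.comap_mono (Submodule.map_mono hAB)
  have hNΦ : N ≤ Φ N := by
    intro x hx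
    simp only [hΦ, Submodule.mem_comap, hq]
    have : q x = 0 := (Submodule.Quotient.mk_eq_zero N).2 hx
    rw [this]
    exact Submodule.zero_mem _
  have chain_mono : Monotone fun n => Φ^[n] N := by
    have step : ∀ n, Φ^[n] N ≤ Φ^[n + 1] N := by
      intro n
      induction n with
      | zero => simpa using hNΦ
      | succ k ih =>
        rw [Function.iterate_succ_apply', Function.iterate_succ_apply']
        exact Φmono ih
    exact monotone_nat_of_le_succ step
  obtain ⟨k, hk⟩ := monotone_stabilizes_iff_noetherian.mpr ‹IsNoetherian R M›
    ⟨fun n => Φ^[n] N, chain_mono⟩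
  set A : Submodule R M := Φ^[k] N with hA
  have hNA : N ≤ A := by
    have := chain_mono (Nat.zero_le k)
    simpa [hA] using this
  have hfix : Φ A = A := by
    have := hk (k + 1) (Nat.le_succ k)
    simp only [OrderHom.coe_mk] at this
    rw [hA, ← Function.iterate_succ_apply' Φ k N]
    exact this.symm
  -- map q A = map f A
  have himg : Submodule.map q A = Submodule.map f A := by
    have h1 : Submodule.comap q (Submodule.map f A) = A := hfix
    have hsurj : Function.Surjective q := Submodule.mkQ_surjective N
    calc Submodule.map q A = Submodule.map q (Submodule.comap q (Submodule.map f A)) := by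
          rw [h1]
      _ = Submodule.map f A := Submodule.map_comap_eq_of_surjective hsurj _
  -- restrictions to A
  set fA : A →ₗ[R] M ⧸ N := f.comp A.subtype with hfA
  set qA : A →ₗ[R] M ⧸ N := q.comp A.subtype with hqA
  have hfAinj : Function.Injective fA := hf.comp A.injective_subtype
  have hrange_f : LinearMap.range fA = Submodule.map f A := by
    rw [hfA, LinearMap.range_comp, Submodule.range_subtype]
  have hrange_q : LinearMap.range qA = Submodule.map f A := by
    rw [hqA, LinearMap.range_comp, Submodule.range_subtype, himg]
  -- the equivalence A ≃ range fA
  let e : A ≃ₗ[R] LinearMap.range fA := LinearEquiv.ofInjective fA hfAinj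
  -- endomorphism of A
  have hmem : ∀ x : A, qA x ∈ LinearMap.range fA := by
    intro x
    rw [hrange_f, ← hrange_q]
    exact LinearMap.mem_range_self qA x
  set φ : A →ₗ[R] A := e.symm.toLinearMap.comp (qA.codRestrict (LinearMap.range fA) hmem)
    with hφ
  have hφsurj : Function.Surjective φ := by
    intro y
    obtain ⟨x, hx⟩ : (e y : M ⧸ N) ∈ LinearMap.range qA := by
      rw [hrange_q, ← hrange_f]; exact (e y).2
    refine ⟨x, ?_⟩
    have : qA.codRestrict (LinearMap.range fA) hmem x = e y := Subtype.ext hx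
    simp [hφ, this]
  have hφinj : Function.Injective φ :=
    IsNoetherian.injective_of_surjective_endomorphism φ hφsurj
  -- N is contained in the kernel of φ, hence N = 0
  ext x
  simp only [Submodule.mem_bot]
  constructor
  · intro hx
    have hxA : x ∈ A := hNA hx
    have hqx : qA ⟨x, hxA⟩ = 0 := by
      simp only [hqA, LinearMap.comp_apply, Submodule.subtype_apply, hq]
      exact (Submodule.Quotient.mk_eq_zero N).2 hx
    have : φ ⟨x, hxA⟩ = 0 := by
      have hcod : qA.codRestrict (LinearMap.range fA) hmem ⟨x, hxA⟩ = 0 :=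
        Subtype.ext (by simpa using hqx)
      simp [hφ, hcod]
    have := hφinj (a₁ := ⟨x, hxA⟩) (a₂ := 0) (by simpa using this)
    exact congrArg Subtype.val this
  · rintro rfl; exact N.zero_mem

/-- Every finitely generated module over a Noetherian ring is super Bassian. -/
theorem isSuperBassian_of_finite (R : Type*) [Ring R] [IsNoetherianRing R] (M : Type*)
    [AddCommGroup M] [Module R M] (h : Module.Finite R M) : IsSuperBassian R M := by
  have : IsNoetherian R M := isNoetherian_of_isNoetherianRing_of_finite R M
  intro K
  exact isBassian_of_isNoetherian R (M ⧸ K)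
end

section
/- Every finitely generated right module over a right Noetherian ring is hereditarily Bassian. -/
/-- Every finitely generated module over a Noetherian ring is hereditarily Bassian. -/
theorem isHereditarilyBassian_of_finite (R : Type*) [Ring R] [IsNoetherianRing R]
    (M : Type*) [AddCommGroup M] [Module R M] (h : Module.Finite R M) :
    IsHereditarilyBassian R M := by
  haveI : IsNoetherian R M := isNoetherian_of_isNoetherianRing_of_finite R M
  intro N
  exact isBassian_of_isNoetherian R N
end

section
/- Let M be a distributive right R-module (the lattice of submodules is distributive). Then M is super Bassian if and only if every factor module of M is generalized Bassian. -/
/-- A module `M` is *generalized Bassian* if every monomorphism `M → M/N` forces `N` to be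
a direct summand of `M`. -/
def IsGeneralizedBassian (R : Type*) [Ring R] (M : Type*) [AddCommGroup M] [Module R M] :
    Prop :=
  ∀ N : Submodule R M, (∃ f : M →ₗ[R] M ⧸ N, Function.Injective f) →
    ∃ N' : Submodule R M, IsCompl N N'

/-- Comap along a surjective map commutes with sup. -/
lemma aux_comap_sup {R M P : Type*} [Ring R] [AddCommGroup M] [Module R M]
    [AddCommGroup P] [Module R P] (f : M →ₗ[R] P) (hf : Function.Surjective f)
    (B C : Submodule R P) :
    Submodule.comap f (B ⊔ C) = Submodule.comap f B ⊔ Submodule.comap f C := by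
  apply le_antisymm
  · intro x hx
    rw [Submodule.mem_comap, Submodule.mem_sup] at hx
    obtain ⟨b, hb, c, hc, hbc⟩ := hx
    obtain ⟨xb, hxb⟩ := hf b
    refine Submodule.mem_sup.mpr ⟨xb, ?_, x - xb, ?_, by abel⟩
    · simp [Submodule.mem_comap, hxb, hb]
    · simp only [Submodule.mem_comap, map_sub, hxb]
      rw [← hbc]; simpa using hc
  · exact sup_le (Submodule.comap_mono le_sup_left) (Submodule.comap_mono le_sup_right)

/-- Distributivity passes to quotient modules. -/
lemma aux_dist_quot {R M : Type*} [Ring R] [AddCommGroup M] [Module R M]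
    (hdist : ∀ A B C : Submodule R M, A ⊓ (B ⊔ C) = (A ⊓ B) ⊔ (A ⊓ C))
    (K : Submodule R M) :
    ∀ A B C : Submodule R (M ⧸ K), A ⊓ (B ⊔ C) = (A ⊓ B) ⊔ (A ⊓ C) := by
  intro A B C
  have hsurj : Function.Surjective K.mkQ := Submodule.mkQ_surjective K
  have hinj : Function.Injective (Submodule.comap K.mkQ) :=
    Submodule.comap_injective_of_surjective hsurj
  apply hinj
  rw [Submodule.comap_inf, aux_comap_sup _ hsurj, aux_comap_sup _ hsurj,
    Submodule.comap_inf, Submodule.comap_inf, hdist]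

/-- In a distributive module, a submodule that embeds into a disjoint submodule is trivial. -/
lemma aux_key {R P : Type*} [Ring R] [AddCommGroup P] [Module R P]
    (hdist : ∀ A B C : Submodule R P, A ⊓ (B ⊔ C) = (A ⊓ B) ⊔ (A ⊓ C))
    (N N' : Submodule R P) (hd : Disjoint N N')
    (φ : N →ₗ[R] P) (hφ : Function.Injective φ) (hran : ∀ n : N, φ n ∈ N') :
    N = ⊥ := by
  rw [eq_bot_iff]
  intro x hx
  set y : P := φ ⟨x, hx⟩ with hy
  have hyN' : y ∈ N' := hran _
  have hxy : x + y ∈ (Submodule.span R {x + y}) ⊓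
      (Submodule.span R {x} ⊔ Submodule.span R {y}) := by
    refine ⟨Submodule.mem_span_singleton_self _, Submodule.mem_sup.mpr
      ⟨x, Submodule.mem_span_singleton_self _, y, Submodule.mem_span_singleton_self _, rfl⟩⟩
  rw [hdist] at hxy
  obtain ⟨u, hu, v, hv, huv⟩ := Submodule.mem_sup.mp hxy
  obtain ⟨r, hr⟩ := Submodule.mem_span_singleton.mp hu.1
  obtain ⟨s, hs⟩ := Submodule.mem_span_singleton.mp hu.2
  obtain ⟨t, ht⟩ := Submodule.mem_span_singleton.mp hv.1
  obtain ⟨w, hw⟩ := Submodule.mem_span_singleton.mp hv.2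
  -- u = r•(x+y) = s•x, so r•y = (s-r)•x ∈ N ⊓ N' = ⊥
  have hry : r • y = 0 := by
    have h1 : r • y = (s - r) • x := by
      have : r • x + r • y = s • x := by rw [← smul_add, hr, hs]
      rw [sub_smul]; linear_combination (norm := abel) this
    have h2 : r • y ∈ N ⊓ N' := by
      constructor
      · rw [h1]; exact Submodule.smul_mem _ _ hx
      · exact Submodule.smul_mem _ _ hyN'
    rw [le_bot_iff.mp (disjoint_iff_inf_le.mp hd)] at h2
    simpa using h2
  have hru : u = r • x := by
    rw [← hr, smul_add, hry, add_zero]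
  -- v = t•(x+y) = w•y, so t•x = (w-t)•y ∈ N ⊓ N' = ⊥
  have htx : t • x = 0 := by
    have h1 : t • x = (w - t) • y := by
      have : t • x + t • y = w • y := by rw [← smul_add, ht, hw]
      rw [sub_smul]; linear_combination (norm := abel) this
    have h2 : t • x ∈ N ⊓ N' := by
      constructor
      · exact Submodule.smul_mem _ _ hx
      · rw [h1]; exact Submodule.smul_mem _ _ hyN'
    rw [le_bot_iff.mp (disjoint_iff_inf_le.mp hd)] at h2
    simpa using h2
  have hvy : v = t • y := by
    rw [← ht, smul_add, htx, zero_add]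
  -- x + y = r•x + t•y, so (1-r)•x = (t-1)•y ∈ N ⊓ N' = ⊥
  have hkey : (1 - r) • x = (t - 1) • y := by
    have : r • x + t • y = x + y := by rw [← hru, ← hvy, huv]
    rw [sub_smul, sub_smul, one_smul, one_smul]
    linear_combination (norm := abel) -this
  have hx0 : (1 - r) • x = 0 := by
    have h2 : (1 - r) • x ∈ N ⊓ N' := by
      constructor
      · exact Submodule.smul_mem _ _ hx
      · rw [hkey]; exact Submodule.smul_mem _ _ hyN'
    rw [le_bot_iff.mp (disjoint_iff_inf_le.mp hd)] at h2
    simpa using h2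
  have hxr : x = r • x := by
    have := hx0; rw [sub_smul, one_smul, sub_eq_zero] at this; exact this
  -- y = φ(x) = φ(r•x) = r•φ(x) = r•y = 0
  have hy0 : y = 0 := by
    have hxel : (⟨x, hx⟩ : N) = r • ⟨x, hx⟩ := by
      ext; simpa using hxr
    calc y = φ ⟨x, hx⟩ := rfl
      _ = φ (r • ⟨x, hx⟩) := by rw [← hxel]
      _ = r • φ ⟨x, hx⟩ := map_smul φ r _
      _ = r • y := rfl
      _ = 0 := hry
  have : (⟨x, hx⟩ : N) = 0 := hφ (by simpa [hy] using hy0)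
  simpa using congrArg Subtype.val this

/-- A distributive module is super Bassian iff every factor module of it is generalized
Bassian. -/
theorem distributive_isSuperBassian_iff (R : Type*) [Ring R] (M : Type*) [AddCommGroup M]
    [Module R M]
    (hdist : ∀ A B C : Submodule R M, A ⊓ (B ⊔ C) = (A ⊓ B) ⊔ (A ⊓ C)) :
    IsSuperBassian R M ↔ ∀ K : Submodule R M, IsGeneralizedBassian R (M ⧸ K) := by
  constructor
  · intro hS K N hf
    rw [hS K N hf]
    exact ⟨⊤, isCompl_bot_top⟩
  · intro h K N hf
    obtain ⟨N', hc⟩ := h K N hf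
    obtain ⟨f, hfinj⟩ := hf
    set e := Submodule.quotientEquivOfIsCompl N N' hc
    set φ : N →ₗ[R] (M ⧸ K) :=
      N'.subtype ∘ₗ (e : ((M ⧸ K) ⧸ N) →ₗ[R] N') ∘ₗ f ∘ₗ N.subtype
    refine aux_key (aux_dist_quot hdist K) N N' hc.disjoint φ ?_ ?_
    · exact N'.injective_subtype.comp (e.injective.comp (hfinj.comp N.injective_subtype))
    · intro n; exact (e (f n)).2
end

section
/- If M is a module over a ring R that is not Bassian, then M contains a countably generated submodule which is not Hopfian. -/
/-- A module which is not Bassian contains a countably generated submodule which is not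
Hopfian. -/
theorem exists_countably_generated_not_hopfian (R : Type*) [Ring R] (M : Type*)
    [AddCommGroup M] [Module R M] (h : ¬ IsBassian R M) :
    ∃ X : Submodule R M,
      (∃ s : Set M, s.Countable ∧ X = Submodule.span R s) ∧
      ∃ f : X →ₗ[R] X, Function.Surjective f ∧ ¬ Function.Injective f := by
  unfold IsBassian at h
  push_neg at h
  obtain ⟨N, ⟨f, hf⟩, hN⟩ := h
  obtain ⟨a, haN, ha0⟩ := Submodule.ne_bot_iff N |>.mp hN
  choose sec hsec using Submodule.mkQ_surjective N
  -- the sequence x 0 = a, mkQ (x (n+1)) = f (x n)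
  set x : ℕ → M := fun n => Nat.rec a (fun _ xn => sec (f xn)) n with hxdef
  have hx0 : x 0 = a := rfl
  have hxs : ∀ n, N.mkQ (x (n + 1)) = f (x n) := fun n => hsec _
  set X : Submodule R M := Submodule.span R (Set.range x) with hX
  have hxmem : ∀ n, x n ∈ X := fun n => Submodule.subset_span ⟨n, rfl⟩
  -- π restricted to X lands in range f
  have hrange : ∀ c : X, N.mkQ (X.subtype c) ∈ LinearMap.range f := by
    rintro ⟨m, hm⟩
    simp only [Submodule.coe_subtype]
    refine Submodule.span_induction ?_ ?_ ?_ ?_ hm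
    · rintro _ ⟨n, rfl⟩
      cases n with
      | zero => exact ⟨0, by simp [hx0, (Submodule.Quotient.mk_eq_zero N).2 haN,
          Submodule.mkQ_apply]⟩
      | succ k => exact ⟨x k, (hxs k).symm⟩
    · exact ⟨0, by simp⟩
    · rintro y z _ _ ⟨u, hu⟩ ⟨v, hv⟩; exact ⟨u + v, by simp [hu, hv]⟩
    · rintro r y _ ⟨u, hu⟩; exact ⟨r • u, by simp [hu]⟩
  let e := LinearEquiv.ofInjective f hf
  let ψ : X →ₗ[R] M :=
    e.symm.toLinearMap ∘ₗ LinearMap.codRestrict (LinearMap.range f) (N.mkQ ∘ₗ X.subtype) hrange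
  have hkey : ∀ c : X, f (ψ c) = N.mkQ (c : M) := by
    intro c
    have := e.apply_symm_apply (LinearMap.codRestrict (LinearMap.range f)
      (N.mkQ ∘ₗ X.subtype) hrange c)
    have h2 : (e (ψ c) : M ⧸ N) = f (ψ c) := rfl
    rw [show ψ c = e.symm _ from rfl] at h2 ⊢
    rw [this] at h2
    exact h2.symm
  have hψ0 : ∀ (h0 : x 0 ∈ X), ψ ⟨x 0, h0⟩ = 0 := by
    intro h0
    apply hf
    rw [hkey]
    simp [hx0, Submodule.mkQ_apply, (Submodule.Quotient.mk_eq_zero N).2 haN]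
  have hψs : ∀ n (hn : x (n + 1) ∈ X), ψ ⟨x (n + 1), hn⟩ = x n := by
    intro n hn
    apply hf
    rw [hkey]
    exact hxs n
  have hψmem : ∀ c : X, ψ c ∈ X := by
    rintro ⟨m, hm⟩
    refine Submodule.span_induction (p := fun m hm => ψ ⟨m, hm⟩ ∈ X) ?_ ?_ ?_ ?_ hm
    · rintro _ ⟨n, rfl⟩
      cases n with
      | zero => rw [hψ0]; exact X.zero_mem
      | succ k => rw [hψs]; exact hxmem k
    · show ψ 0 ∈ X
      rw [map_zero]; exact X.zero_mem
    · intro y z hy hz hy' hz'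
      show ψ ⟨y + z, X.add_mem hy hz⟩ ∈ X
      rw [show (⟨y + z, X.add_mem hy hz⟩ : X) = ⟨y, hy⟩ + ⟨z, hz⟩ from rfl, map_add]
      exact X.add_mem hy' hz'
    · intro r y hy hy'
      show ψ ⟨r • y, X.smul_mem r hy⟩ ∈ X
      rw [show (⟨r • y, X.smul_mem r hy⟩ : X) = r • ⟨y, hy⟩ from rfl, map_smul]
      exact X.smul_mem r hy'
  let g : X →ₗ[R] X := ψ.codRestrict X hψmem
  refine ⟨X, ⟨Set.range x, Set.countable_range x, hX⟩, g, ?_, ?_⟩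
  · rintro ⟨m, hm⟩
    have : ∀ m (hm : m ∈ X), (⟨m, hm⟩ : X) ∈ LinearMap.range g := by
      intro m hm
      refine Submodule.span_induction (p := fun m hm => (⟨m, hm⟩ : X) ∈ LinearMap.range g)
        ?_ ?_ ?_ ?_ hm
      · rintro _ ⟨n, rfl⟩
        refine ⟨⟨x (n + 1), hxmem (n + 1)⟩, ?_⟩
        apply Subtype.ext
        simpa [g, LinearMap.codRestrict] using hψs n (hxmem (n + 1))
      · exact ⟨0, by apply Subtype.ext; simp⟩
      · intro y z hy hz hy' hz'
        show (⟨y + z, Submodule.add_mem _ hy hz⟩ : X) ∈ LinearMap.range g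
        rw [show (⟨y + z, Submodule.add_mem _ hy hz⟩ : X) = ⟨y, hy⟩ + ⟨z, hz⟩ from rfl]
        exact Submodule.add_mem _ hy' hz'
      · intro r y hy hy'
        show (⟨r • y, Submodule.smul_mem _ r hy⟩ : X) ∈ LinearMap.range g
        rw [show (⟨r • y, Submodule.smul_mem _ r hy⟩ : X) = r • ⟨y, hy⟩ from rfl]
        exact Submodule.smul_mem _ r hy'
    exact this m hm
  · intro hinj
    have : g ⟨x 0, hxmem 0⟩ = 0 := by
      apply Subtype.ext
      simpa [g, LinearMap.codRestrict] using hψ0 (hxmem 0)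
    have h0 := hinj (a₁ := ⟨x 0, hxmem 0⟩) (a₂ := 0) (by simpa using this)
    apply ha0
    rw [← hx0]
    exact Subtype.ext_iff.mp h0
end

section
/- Let M be an infinitely generated right module over a right perfect ring R. Then there exist a simple right R-module S and a submodule N of M such that M/N is isomorphic to the countably infinite direct sum S^(ω); consequently M is not super Bassian. -/
/-- A (left) ideal `I` is left T-nilpotent if every sequence of its elements has a
vanishing iterated product. -/
def IsTNilpotentIdeal {R : Type*} [Ring R] (I : Ideal R) : Prop :=
  ∀ a : ℕ → R, (∀ n, a n ∈ I) → ∃ n : ℕ, ((List.range (n + 1)).map a).prod = 0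

open Function

theorem exists_seq_forall_prod_range_mem {α : Type*} [Monoid α] {G J : Set α} (h1 : 1 ∈ G)
    (hG : ∀ x ∈ G, ∃ a ∈ J, x * a ∈ G) :
    ∃ a : ℕ → α, (∀ n, a n ∈ J) ∧ ∀ n, ((List.range n).map a).prod ∈ G := by
  choose next hnextJ hnextG using hG
  let g : ℕ → G := fun n => n.rec ⟨1, h1⟩ fun _ x => ⟨x * next x.1 x.2, hnextG x.1 x.2⟩
  refine ⟨fun n => next (g n).1 (g n).2, fun n => hnextJ _ _, fun n => ?_⟩
  suffices ((List.range n).map fun k => next (g k).1 (g k).2).prod = (g n).1 by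
    rw [this]; exact (g n).2
  induction n with
  | zero => rfl
  | succ n ih => rw [List.range_succ, List.map_append, List.prod_append, ih]; simp [g]

section TNilpotent

variable {R : Type*} [Ring R] {J : Ideal R} {M : Type*} [AddCommGroup M] [Module R M]

theorem exists_mul_smul_ne_zero_of_smul_top_eq_top (hJ : (J • ⊤ : Submodule R M) = ⊤) {x : R}
    {m : M} (hm : x • m ≠ 0) : ∃ a ∈ J, ∃ m' : M, (x * a) • m' ≠ 0 := by
  by_contra! h
  refine hm (Submodule.smul_induction_on (p := fun m => x • m = 0) (hJ ▸ Submodule.mem_top)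
    (fun a ha n _ => ?_) fun m₁ m₂ h₁ h₂ => ?_)
  · rw [← mul_smul, h a ha n]
  · rw [smul_add, h₁, h₂, add_zero]

theorem IsTNilpotentIdeal.subsingleton_of_smul_top_eq_top (htn : IsTNilpotentIdeal J)
    (hJ : (J • ⊤ : Submodule R M) = ⊤) : Subsingleton M := by
  by_contra hM
  obtain ⟨m, hm⟩ := @exists_ne M (not_subsingleton_iff_nontrivial.mp hM) 0
  obtain ⟨a, haJ, ha⟩ := exists_seq_forall_prod_range_mem (G := {x : R | ∃ m : M, x • m ≠ 0})
    ⟨m, by rwa [one_smul]⟩ fun x ⟨m, hm⟩ => exists_mul_smul_ne_zero_of_smul_top_eq_top hJ hm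
  obtain ⟨n, hn⟩ := htn a haJ
  obtain ⟨m', hm'⟩ := ha (n + 1)
  exact hm' (by rw [hn, zero_smul])

theorem IsTNilpotentIdeal.eq_top_of_sup_smul_top_eq_top (htn : IsTNilpotentIdeal J)
    {N : Submodule R M} (hN : N ⊔ J • ⊤ = ⊤) : N = ⊤ := by
  rw [← Submodule.Quotient.subsingleton_iff]
  refine htn.subsingleton_of_smul_top_eq_top ?_
  rw [← Submodule.range_mkQ, ← Submodule.map_top, ← Submodule.map_smul'', Submodule.map_top,
    Submodule.range_mkQ, Submodule.map_mkQ_eq_top, hN]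

theorem IsTNilpotentIdeal.finite_of_finite_quotient_smul_top (htn : IsTNilpotentIdeal J)
    [Module.Finite R (M ⧸ (J • ⊤ : Submodule R M))] : Module.Finite R M := by
  obtain ⟨n, f, hf⟩ := Module.Finite.exists_fin' R (M ⧸ (J • ⊤ : Submodule R M))
  obtain ⟨g, hg⟩ := Module.projective_lifting_property _ f (Submodule.mkQ_surjective _)
  have hg_top : LinearMap.range g = ⊤ := by
    refine htn.eq_top_of_sup_smul_top_eq_top ?_
    rw [sup_comm, ← Submodule.map_mkQ_eq_top, ← LinearMap.range_comp, hg,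
      LinearMap.range_eq_top.mpr hf]
  exact Module.Finite.of_surjective g (LinearMap.range_eq_top.mp hg_top)

end TNilpotent

section Semisimple

variable {R : Type*} [Ring R] (I : Ideal R) [I.IsTwoSided] [IsSemisimpleModule R (R ⧸ I)]

theorem isSemisimpleRing_quotient_of_isSemisimpleModule : IsSemisimpleRing (R ⧸ I) :=
  let id' : (R ⧸ I) →ₛₗ[Ideal.Quotient.mk I] (R ⧸ I) :=
    { toFun := id, map_add' := fun _ _ => rfl, map_smul' := fun _ _ => rfl }
  (id'.isSemisimpleModule_iff_of_bijective bijective_id).mp ‹_›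

variable {I} in
theorem Module.IsTorsionBySet.isSemisimpleModule {Q : Type*} [AddCommGroup Q] [Module R Q]
    (hQ : Module.IsTorsionBySet R Q I) : IsSemisimpleModule R Q :=
  letI := hQ.module
  haveI := isSemisimpleRing_quotient_of_isSemisimpleModule I
  hQ.isSemisimpleModule_iff.mp inferInstance

end Semisimple

section SimpleModules

universe w

variable {R : Type*} [Ring R] (I : Ideal R) [IsSemisimpleModule R (R ⧸ I)]

theorem exists_finite_set_linearEquiv_of_isTorsionBySet :
    ∃ T : Set (Submodule R (R ⧸ I)), T.Finite ∧ ∀ (N : Type w) [AddCommGroup N] [Module R N]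
      [IsSimpleModule R N], Module.IsTorsionBySet R N I → ∃ P ∈ T, Nonempty (N ≃ₗ[R] P) := by
  obtain ⟨T, hind, hsup, hsimple⟩ :=
    IsSemisimpleModule.exists_sSupIndep_sSup_simples_eq_top R (R ⧸ I)
  refine ⟨T, WellFoundedGT.finite_of_sSupIndep hind, fun N _ _ _ hN => ?_⟩
  obtain ⟨x, hx⟩ := @exists_ne N (IsSimpleModule.nontrivial R N) 0
  let f : R ⧸ I →ₗ[R] N := I.liftQ (LinearMap.toSpanSingleton R N x) fun a ha => @hN x ⟨a, ha⟩
  have hf : f (Submodule.Quotient.mk 1) = x := one_smul R x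
  obtain ⟨P, ⟨e⟩⟩ := LinearMap.linearEquiv_of_ne_zero (f := f) fun h => hx (by rw [← hf, h, LinearMap.zero_apply])
  have := IsSimpleModule.congr e.symm
  have (m : T) : IsSimpleModule R m := hsimple _ m.2
  obtain ⟨S, hS, ⟨e'⟩⟩ := P.linearEquiv_of_sSup_eq_top T hsup
  exact ⟨S, hS, ⟨e.trans e'⟩⟩

end SimpleModules

theorem exists_injective_nat_forall_eq {α β : Type*} [Infinite α] [Finite β] (c : α → β) :
    ∃ e : ℕ → α, Injective e ∧ ∀ n, c (e n) = c (e 0) := by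
  obtain ⟨b, hb⟩ := Finite.exists_infinite_fiber c
  let e := Infinite.natEmbedding (c ⁻¹' {b})
  exact ⟨fun n => (e n).1, Subtype.val_injective.comp e.injective,
    fun n => (e n).2.trans (e 0).2.symm⟩

section Decomposition

open DirectSum

variable {R : Type*} [Ring R] {Q : Type*} [AddCommGroup Q] [Module R Q] [IsSemisimpleModule R Q]

theorem IsSemisimpleModule.exists_surjective_of_injective {D : Type*} [AddCommGroup D]
    [Module R D] (g : D →ₗ[R] Q) (hg : Injective g) : ∃ f : Q →ₗ[R] D, Surjective f :=
  let ⟨f, hf⟩ := IsSemisimpleModule.extension_property g hg LinearMap.id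
  ⟨f, fun d => ⟨g d, LinearMap.congr_fun hf d⟩⟩

theorem IsSemisimpleModule.exists_surjective_directSum_of_iSupIndep {ι : Type*} [DecidableEq ι]
    {S : Type*} [AddCommGroup S] [Module R S] {p : ι → Submodule R Q} (hp : iSupIndep p)
    (e : ∀ i, S ≃ₗ[R] p i) : ∃ f : Q →ₗ[R] ⨁ _ : ι, S, Surjective f :=
  exists_surjective_of_injective
    (DFinsupp.lsum ℕ (fun i => (p i).subtype) ∘ₗ (DFinsupp.mapRange.linearEquiv e).toLinearMap)
    (hp.dfinsupp_lsum_injective.comp (DFinsupp.mapRange.linearEquiv e).injective)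

theorem exists_surjective_directSum_simple_of_not_finite (I : Ideal R)
    [IsSemisimpleModule R (R ⧸ I)] (hQ : Module.IsTorsionBySet R Q I)
    (hfin : ¬ Module.Finite R Q) :
    ∃ S : Submodule R Q, IsSimpleModule R S ∧ ∃ f : Q →ₗ[R] ⨁ _ : ℕ, S, Surjective f := by
  obtain ⟨s, hind, hsup, hsimple⟩ := IsSemisimpleModule.exists_sSupIndep_sSup_simples_eq_top R Q
  have : Infinite s := by
    refine Set.infinite_coe_iff.mpr fun hs => hfin ⟨?_⟩
    have := hs.to_subtype
    rw [← hsup, sSup_eq_iSup']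
    exact Submodule.fg_iSup _ fun m =>
      Module.Finite.iff_fg.mp (have := hsimple _ m.2; inferInstance)
  obtain ⟨T, hT, htype⟩ := exists_finite_set_linearEquiv_of_isTorsionBySet I
  have := hT.to_subtype
  have (m : s) : ∃ P : T, Nonempty (m.1 ≃ₗ[R] P.1) := by
    have := hsimple _ m.2
    obtain ⟨P, hP, e⟩ := htype m.1 fun x a => Subtype.ext (@hQ x a)
    exact ⟨⟨P, hP⟩, e⟩
  choose c hc using this
  obtain ⟨e, he, hce⟩ := exists_injective_nat_forall_eq c
  refine ⟨(e 0).1, hsimple _ (e 0).2, IsSemisimpleModule.exists_surjective_directSum_of_iSupIndep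
    (iSupIndep.comp ((sSupIndep_iff s).mp hind) he) fun n => ?_⟩
  exact ((hc (e 0)).some.trans (.ofEq _ _ (congrArg Subtype.val (hce n).symm))).trans
    (hc (e n)).some.symm

end Decomposition

section Bassian

variable {R : Type*} [Ring R]

theorem not_isBassian_of_injective_of_disjoint {X : Type*} [AddCommGroup X] [Module R X]
    {g : X →ₗ[R] X} (hg : Injective g) {N : Submodule R X} (hN : N ≠ ⊥)
    (hdisj : Disjoint (LinearMap.range g) N) : ¬ IsBassian R X := by
  refine fun h => hN (h N ⟨N.mkQ ∘ₗ g, ?_⟩)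
  rw [← LinearMap.ker_eq_bot, LinearMap.ker_comp, Submodule.ker_mkQ, eq_bot_iff]
  intro x hx
  have hgx : g x = 0 := (Submodule.mem_bot R).mp (hdisj.le_bot ⟨LinearMap.mem_range_self g x, hx⟩)
  exact (Submodule.mem_bot R).mpr (hg (hgx.trans g.map_zero.symm))

theorem IsBassian.of_linearEquiv {X Y : Type*} [AddCommGroup X] [Module R X] [AddCommGroup Y]
    [Module R Y] (e : X ≃ₗ[R] Y) (h : IsBassian R X) : IsBassian R Y := by
  rintro N ⟨f, hf⟩
  have hN : (N.comap (e : X →ₗ[R] Y)).map (e : X →ₗ[R] Y) = N :=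
    Submodule.map_comap_eq_of_surjective e.surjective N
  let q : (X ⧸ N.comap (e : X →ₗ[R] Y)) ≃ₗ[R] Y ⧸ N := Submodule.Quotient.equiv _ N e hN
  have hbot : N.comap (e : X →ₗ[R] Y) = ⊥ := h _
    ⟨(q.symm : Y ⧸ N →ₗ[R] _) ∘ₗ f ∘ₗ (e : X →ₗ[R] Y),
      q.symm.injective.comp (hf.comp e.injective)⟩
  rw [← hN, hbot, Submodule.map_bot]

theorem Finsupp.not_isBassian_nat (S : Type*) [AddCommGroup S] [Module R S] [Nontrivial S] :
    ¬ IsBassian R (ℕ →₀ S) := by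
  refine not_isBassian_of_injective_of_disjoint (g := Finsupp.lmapDomain S R Nat.succ)
    (Finsupp.mapDomain_injective Nat.succ_injective) (N := LinearMap.range (Finsupp.lsingle 0))
    ?_ ?_
  · obtain ⟨s, hs⟩ := exists_ne (0 : S)
    exact (Submodule.ne_bot_iff _).mpr ⟨single 0 s, ⟨s, rfl⟩, single_ne_zero.mpr hs⟩
  · rw [Submodule.disjoint_def]
    rintro _ ⟨v, rfl⟩ ⟨s, hs⟩
    have hs0 : s = 0 := by
      simpa [Finsupp.mapDomain_of_notMem_range (f := Nat.succ) v 0 (by simp)]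
        using DFunLike.congr_fun hs 0
    rw [← hs, hs0, LinearMap.map_zero]

theorem DirectSum.not_isBassian_nat (S : Type*) [AddCommGroup S] [Module R S] [Nontrivial S] :
    ¬ IsBassian R (DirectSum ℕ fun _ => S) :=
  fun h => Finsupp.not_isBassian_nat S (h.of_linearEquiv (finsuppLEquivDirectSum R S ℕ).symm)

end Bassian

universe u v

/-- Over a perfect ring (`R/J(R)` semisimple and `J(R)` T-nilpotent), every infinitely
generated module has a quotient isomorphic to `S^(ω)` for a simple module `S`;
consequently it is not super Bassian. -/
theorem perfect_infinitely_generated (R : Type u) [Ring R] (M : Type v) [AddCommGroup M]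
    [Module R M]
    (hss : IsSemisimpleModule R (R ⧸ (⊥ : Ideal R).jacobson))
    (htn : IsTNilpotentIdeal ((⊥ : Ideal R).jacobson))
    (hM : ¬ Module.Finite R M) :
    (∃ (S : ModuleCat.{v} R) (N : Submodule R M),
        IsSimpleModule R S ∧ Nonempty ((M ⧸ N) ≃ₗ[R] DirectSum ℕ fun _ => S)) ∧
      ¬ IsSuperBassian R M := by
  set J : Ideal R := (⊥ : Ideal R).jacobson
  have hJ := Module.isTorsionBySet_quotient_ideal_smul M J
  have := hJ.isSemisimpleModule
  have hfin : ¬ Module.Finite R (M ⧸ (J • ⊤ : Submodule R M)) := fun _ =>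
    hM htn.finite_of_finite_quotient_smul_top
  obtain ⟨S, hS, f, hf⟩ := exists_surjective_directSum_simple_of_not_finite J hJ hfin
  let e := (f ∘ₗ (J • ⊤ : Submodule R M).mkQ).quotKerEquivOfSurjective
    (hf.comp (Submodule.mkQ_surjective _))
  have := IsSimpleModule.nontrivial R S
  exact ⟨⟨ModuleCat.of R S, _, hS, ⟨e⟩⟩,
    fun h => DirectSum.not_isBassian_nat S ((h _).of_linearEquiv e)⟩
end

section
/- Let R be a semilocal ring with Jacobson radical J, and let M be a semi-Artinian right R-module such that Soc(M) is finitely generated and M·J^n = 0 for some natural number n. Then M is Bassian. -/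
/-- The *socle* of a module: the sum of all its simple submodules, i.e. the supremum of
the atoms of its submodule lattice. -/
def Socle (R : Type*) [Ring R] (M : Type*) [AddCommGroup M] [Module R M] : Submodule R M :=
  sSup {N : Submodule R M | IsAtom N}

section Aux

variable {R : Type*} [Ring R] {M : Type*} [AddCommGroup M] [Module R M]

/-- Any semisimple submodule is contained in the socle. -/
lemma le_socle_of_isSemisimple (N : Submodule R M) (h : IsSemisimpleModule R N) :
    N ≤ Socle R M := by
  haveI := h
  have htop : sSup {m : Submodule R ↥N | IsSimpleModule R m} = ⊤ :=
    IsSemisimpleModule.sSup_simples_eq_top R ↥N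
  have hN : N = Submodule.map N.subtype ⊤ := by
    rw [Submodule.map_top, Submodule.range_subtype]
  rw [hN, ← htop, (Submodule.gc_map_comap N.subtype).l_sSup]
  apply iSup_le
  rintro m
  apply iSup_le
  intro hm
  haveI : IsSimpleModule R ↥m := hm
  refine le_sSup ?_
  have : IsSimpleModule R ↥(Submodule.map N.subtype m) :=
    IsSimpleModule.congr
      (Submodule.equivMapOfInjective N.subtype N.injective_subtype m).symm
  exact isSimpleModule_iff_isAtom.mp this

lemma socle_isSemisimple : IsSemisimpleModule R ↥(Socle R M) := by
  rw [Socle, sSup_eq_iSup]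
  refine isSemisimpleModule_biSup_of_isSemisimpleModule_submodule ?_
  intro m hm
  have : IsSimpleModule R ↥m := isSimpleModule_iff_isAtom.mpr hm
  infer_instance

lemma range_le_socle {X : Type*} [AddCommGroup X] [Module R X] (hX : IsSemisimpleModule R X)
    (f : X →ₗ[R] M) : LinearMap.range f ≤ Socle R M :=
  le_socle_of_isSemisimple _ (IsSemisimpleModule.range f)

end Aux

section Main

universe u v

variable {R : Type u} [Ring R]

lemma bassian_induction (hsl : IsSemisimpleModule R (R ⧸ (⊥ : Ideal R).jacobson)) :
    ∀ n : ℕ, ∀ (M : Type v) (_ : AddCommGroup M) (_ : Module R M),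
      (Socle R M).FG →
      (∀ g : Fin n → R, (∀ i, g i ∈ (⊥ : Ideal R).jacobson) →
        ∀ m : M, (List.ofFn g).prod • m = 0) →
      IsBassian R M := by
  intro n
  induction n with
  | zero =>
    intro M _ _ _ hJ N _
    have hm : ∀ m : M, m = 0 := by
      intro m
      have := hJ (fun i => i.elim0) (fun i => i.elim0) m
      simpa using this
    rw [eq_bot_iff]
    intro x _
    simp [hm x]
  | succ n ih =>
    intro M _ _ hsoc hJ N hN
    obtain ⟨f, hf⟩ := hN
    set J := (⊥ : Ideal R).jacobson with hJdef
    -- products of n+1 elements of J kill M; auxiliary form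
    have hjp : ∀ j ∈ J, ∀ (g : Fin n → R), (∀ i, g i ∈ J) → ∀ m : M,
        (j * (List.ofFn g).prod) • m = 0 := by
      intro j hj g hg m
      have hof : List.ofFn (Fin.cons j g : Fin (n+1) → R) = j :: List.ofFn g := by
        rw [List.ofFn_succ]
        simp
      have hmem : ∀ i, (Fin.cons j g : Fin (n+1) → R) i ∈ J := by
        intro i
        refine Fin.cases ?_ ?_ i
        · simpa using hj
        · intro k; simpa using hg k
      have := hJ (Fin.cons j g) hmem m
      rwa [hof, List.prod_cons] at this
    -- the set of products of n elements of J applied to M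
    set S : Set M := {x | ∃ g : Fin n → R, (∀ i, g i ∈ J) ∧ ∃ m : M,
      (List.ofFn g).prod • m = x} with hSdef
    set A : Submodule R M := Submodule.span R S with hAdef
    -- A is contained in the socle
    have hA : A ≤ Socle R M := by
      rw [hAdef, Submodule.span_le]
      rintro x ⟨g, hg, m, rfl⟩
      set φ := LinearMap.toSpanSingleton R M ((List.ofFn g).prod • m) with hφdef
      have hker : J ≤ LinearMap.ker φ := by
        intro j hj
        rw [LinearMap.mem_ker, hφdef, LinearMap.toSpanSingleton_apply, smul_smul]
        exact hjp j hj g hg m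
      have hx : (List.ofFn g).prod • m ∈ LinearMap.range (J.liftQ φ hker) := by
        refine ⟨Submodule.Quotient.mk 1, ?_⟩
        rw [Submodule.liftQ_apply, hφdef, LinearMap.toSpanSingleton_apply, one_smul]
      exact range_le_socle hsl _ hx
    -- socle finiteness data
    haveI hss : IsSemisimpleModule R ↥(Socle R M) := socle_isSemisimple
    haveI : Module.Finite R ↥(Socle R M) := Module.Finite.iff_fg.mpr hsoc
    haveI : IsArtinian R ↥(Socle R M) := inferInstance
    haveI : IsNoetherian R ↥(Socle R M) := inferInstance
    have hfg_le : ∀ X : Submodule R M, X ≤ Socle R M → X.FG := by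
      intro X hX
      have h1 := IsNoetherian.noetherian (Submodule.comap (Socle R M).subtype X)
      have h2 := Submodule.FG.map (f := (Socle R M).subtype) h1
      rwa [Submodule.map_comap_subtype, inf_eq_right.mpr hX] at h2
    -- A is semisimple and Artinian
    have eA : ↥(Submodule.comap (Socle R M).subtype A) ≃ₗ[R] ↥A :=
      Submodule.comapSubtypeEquivOfLe hA
    haveI : IsArtinian R ↥A := isArtinian_of_linearEquiv eA
    haveI hAss : IsSemisimpleModule R ↥A := IsSemisimpleModule.congr eA.symm
    -- f maps A into (A + N)/N
    have hfA : ∀ x ∈ A, f x ∈ Submodule.map N.mkQ A := by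
      intro x hx
      have : A ≤ Submodule.comap f (Submodule.map N.mkQ A) := by
        rw [hAdef, Submodule.span_le]
        rintro y ⟨g, hg, m, rfl⟩
        obtain ⟨m₀, hm₀⟩ := N.mkQ_surjective (f m)
        have heq : f ((List.ofFn g).prod • m) = N.mkQ ((List.ofFn g).prod • m₀) := by
          rw [map_smul, ← hm₀, map_smul]
        have hmem : f ((List.ofFn g).prod • m) ∈ Submodule.map N.mkQ A := by
          rw [heq]
          exact Submodule.mem_map_of_mem (Submodule.subset_span ⟨g, hg, m₀, rfl⟩)
        exact hmem
      exact this hx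
    -- key step 1 : N ⊓ A = ⊥
    have key1 : N ⊓ A = ⊥ := by
      set B : Submodule R ↥A := Submodule.comap A.subtype N with hBdef
      set T : Submodule R (M ⧸ N) := Submodule.map N.mkQ A with hTdef
      set q : ↥A →ₗ[R] M ⧸ N := N.mkQ.comp A.subtype with hqdef
      have hqker : LinearMap.ker q = B := by
        rw [hqdef, LinearMap.ker_comp, Submodule.ker_mkQ]
      have hqrange : LinearMap.range q = T := by
        rw [hqdef, LinearMap.range_comp, Submodule.range_subtype]
      have e₂ : (↥A ⧸ B) ≃ₗ[R] ↥T :=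
        (Submodule.quotEquivOfEq B (LinearMap.ker q) hqker.symm).trans
          ((q.quotKerEquivRange).trans (LinearEquiv.ofEq _ _ hqrange))
      obtain ⟨C, hC⟩ := exists_isCompl B
      have e₃ : (↥A ⧸ B) ≃ₗ[R] ↥C := Submodule.quotientEquivOfIsCompl B C hC
      set jmap : ↥A →ₗ[R] ↥T :=
        LinearMap.codRestrict T (f.comp A.subtype) (fun x => hfA x x.2) with hjdef
      have hj_inj : Function.Injective jmap := by
        rw [hjdef]
        intro a b hab
        have : f (A.subtype a) = f (A.subtype b) := congrArg (Subtype.val) hab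
        exact Subtype.ext (hf this)
      set endo : ↥A →ₗ[R] ↥A :=
        C.subtype ∘ₗ (e₃.toLinearMap ∘ₗ (e₂.symm.toLinearMap ∘ₗ jmap)) with hendodef
      have hendo_inj : Function.Injective endo := by
        rw [hendodef]
        exact C.injective_subtype.comp (e₃.injective.comp (e₂.symm.injective.comp hj_inj))
      have hsurj := IsArtinian.surjective_of_injective_endomorphism endo hendo_inj
      have hCtop : C = ⊤ := by
        have hrange : LinearMap.range endo = ⊤ := LinearMap.range_eq_top.mpr hsurj
        have hle : LinearMap.range endo ≤ C := by
          rw [hendodef]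
          intro y hy
          obtain ⟨x, rfl⟩ := hy
          simp only [LinearMap.comp_apply]
          exact Subtype.coe_prop _
        rw [hrange] at hle
        exact top_le_iff.mp hle
      have hBbot : B = ⊥ := by
        have hdisj := hC.disjoint
        rw [hCtop] at hdisj
        exact disjoint_top.mp hdisj
      have := Submodule.map_comap_subtype A N
      rw [← hBdef, hBbot, Submodule.map_bot] at this
      rw [inf_comm, this]
    -- the submodule L, annihilator of products of n elements of J (right saturated)
    set L : Submodule R M :=
      { carrier := {x | ∀ g : Fin n → R, (∀ i, g i ∈ J) → ∀ r : R,
          ((List.ofFn g).prod * r) • x = 0}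
        add_mem' := by
          intro a b ha hb g hg r
          rw [smul_add, ha g hg r, hb g hg r, add_zero]
        zero_mem' := by
          intro g hg r
          rw [smul_zero]
        smul_mem' := by
          intro c x hx g hg r
          rw [smul_smul, mul_assoc]
          exact hx g hg (r * c) } with hLdef
    -- key step 2 : N ≤ L
    have key2 : N ≤ L := by
      intro m hm g hg r
      have hmem : (List.ofFn g).prod • (r • m) ∈ N ⊓ A := by
        constructor
        · exact N.smul_mem _ (N.smul_mem _ hm)
        · exact Submodule.subset_span ⟨g, hg, r • m, rfl⟩
      rw [key1, Submodule.mem_bot] at hmem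
      rwa [mul_smul]
    -- key step 3 : f maps L into (L + N)/N
    have key3 : ∀ x ∈ L, f x ∈ Submodule.map N.mkQ L := by
      intro x hx
      obtain ⟨m₀, hm₀⟩ := N.mkQ_surjective (f x)
      have hm₀L : m₀ ∈ L := by
        intro g hg r
        have h1 : N.mkQ (((List.ofFn g).prod * r) • m₀) = 0 := by
          rw [map_smul, hm₀, ← map_smul]
          have : ((List.ofFn g).prod * r) • x = 0 := hx g hg r
          rw [this, map_zero]
        have h2 : ((List.ofFn g).prod * r) • m₀ ∈ N := by
          rwa [← Submodule.Quotient.mk_eq_zero]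
        have h3 : ((List.ofFn g).prod * r) • m₀ ∈ A := by
          rw [mul_smul]
          exact Submodule.subset_span ⟨g, hg, r • m₀, rfl⟩
        have : ((List.ofFn g).prod * r) • m₀ ∈ N ⊓ A := ⟨h2, h3⟩
        rwa [key1, Submodule.mem_bot] at this
      exact ⟨m₀, hm₀L, hm₀⟩
    -- set up the induced injection L → L / N'
    set N' : Submodule R ↥L := Submodule.comap L.subtype N with hN'def
    set θ : ↥L →ₗ[R] M ⧸ N := N.mkQ.comp L.subtype with hθdef
    have hθker : LinearMap.ker θ = N' := by
      rw [hθdef, LinearMap.ker_comp, Submodule.ker_mkQ]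
    have hθrange : LinearMap.range θ = Submodule.map N.mkQ L := by
      rw [hθdef, LinearMap.range_comp, Submodule.range_subtype]
    have eL : (↥L ⧸ N') ≃ₗ[R] ↥(Submodule.map N.mkQ L) :=
      (Submodule.quotEquivOfEq N' (LinearMap.ker θ) hθker.symm).trans
        ((θ.quotKerEquivRange).trans (LinearEquiv.ofEq _ _ hθrange))
    set fL : ↥L →ₗ[R] ↥L ⧸ N' :=
      eL.symm.toLinearMap ∘ₗ
        LinearMap.codRestrict (Submodule.map N.mkQ L) (f.comp L.subtype)
          (fun x => key3 x x.2) with hfLdef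
    have hfL_inj : Function.Injective fL := by
      rw [hfLdef]
      refine eL.symm.injective.comp ?_
      intro a b hab
      have : f (L.subtype a) = f (L.subtype b) := congrArg (Subtype.val) hab
      exact Subtype.ext (hf this)
    -- hypotheses of the induction for L
    have hJL : ∀ g : Fin n → R, (∀ i, g i ∈ J) →
        ∀ m : ↥L, (List.ofFn g).prod • m = 0 := by
      intro g hg m
      apply Subtype.ext
      have := m.2 g hg 1
      rw [mul_one] at this
      simpa using this
    have hsocL : (Socle R ↥L).FG := by
      have hsemi : IsSemisimpleModule R ↥(Submodule.map L.subtype (Socle R ↥L)) := by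
        haveI : IsSemisimpleModule R ↥(Socle R ↥L) := socle_isSemisimple
        have e := Submodule.equivMapOfInjective L.subtype L.injective_subtype (Socle R ↥L)
        exact IsSemisimpleModule.congr e.symm
      have hle : Submodule.map L.subtype (Socle R ↥L) ≤ Socle R M :=
        le_socle_of_isSemisimple _ hsemi
      have hfg : (Submodule.map L.subtype (Socle R ↥L)).FG := hfg_le _ hle
      exact Submodule.fg_of_fg_map_injective L.subtype L.injective_subtype hfg
    have hN'bot : N' = ⊥ :=
      ih ↥L _ _ hsocL hJL N' ⟨fL, hfL_inj⟩
    have := Submodule.map_comap_subtype L N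
    rw [← hN'def, hN'bot, Submodule.map_bot, inf_eq_right.mpr key2] at this
    exact this.symm

end Main

/-- Over a semilocal ring, a semi-Artinian module with finitely generated socle that is
annihilated by `J(R)^n` for some `n` is Bassian. -/
theorem bassian_of_semiartinian (R : Type*) [Ring R] (M : Type*) [AddCommGroup M]
    [Module R M]
    (hsl : IsSemisimpleModule R (R ⧸ (⊥ : Ideal R).jacobson))
    (hsa : ∀ N : Submodule R M, N ≠ ⊤ → Socle R (M ⧸ N) ≠ ⊥)
    (hsoc : (Socle R M).FG)
    (n : ℕ)
    (hJn : ∀ g : Fin n → R, (∀ i, g i ∈ (⊥ : Ideal R).jacobson) →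
      ∀ m : M, (List.ofFn g).prod • m = 0) :
    IsBassian R M :=
  bassian_induction hsl n M _ _ hsoc hJn
end
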